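/- Let M be a d×n matrix over K of rank d and define p(ω) = val(det M_ω) ∈ ℤ ∪ {∞} for each d-subset ω of {1,…,n}, where M_ω is the d×d submatrix with columns indexed by ω. For u ∈ (ℤ ∪ {∞})ⁿ not identically ∞, the following are equivalent: (i) for every (d+1)-subset τ of {1,…,n}, there exist distinct i, j ∈ τ such that p(τ∖{i}) + u_i = p(τ∖{j}) + u_j = min_{k ∈ τ} (p(τ∖{k}) + u_k), the arithmetic taken in ℤ ∪ {∞}; (ii) there exists a nonzero vector v in the row space of M over K with val(v_i) = u_i for all i. (The lattice points of the tropical linear space L_p are precisely the valuations of the vectors in the row space of M.) -/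

import Mathlib

/- Speyer–Sturmfels: for a d×n matrix M over K = ℂ((z)) of rank d, with valuated matroid
   p(ω) = val(det M_ω), a point u ∈ (ℤ ∪ {∞})ⁿ (not identically ∞) lies in the tropical
   linear space L_p iff u = val(v) for some nonzero vector v in the row space of M. -/

noncomputable section
set_option synthInstance.maxHeartbeats 1000000
set_option maxHeartbeats 1000000

abbrev K := LaurentSeries ℂ

open Classical in
def zval (c : K) : WithTop ℤ := if c = 0 then ⊤ else ((c.order : ℤ) : WithTop ℤ)

/-- The minimum of `f` over the finite set `s` is attained at least twice. -/
def MinAttainedTwice {ι α : Type*} [LinearOrder α] (s : Finset ι) (f : ι → α) : Prop :=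
  ∃ i ∈ s, ∃ j ∈ s, i ≠ j ∧ f i = f j ∧ ∀ k ∈ s, f i ≤ f k

/-- The valuated matroid of the matrix `M`: `p(ω) = val (det M_ω)` for `d`-subsets `ω`
(and `∞` for subsets of the wrong cardinality). -/
def pval {d n : ℕ} (M : Matrix (Fin d) (Fin n) K) (ω : Finset (Fin n)) : WithTop ℤ :=
  if h : ω.card = d then
    zval (M.submatrix id (fun k => ((ω.orderIsoOfFin h) k : Fin n))).det
  else ⊤

/-!
Everything rests on Cramer's rule: for `v` in the row space and columns `f : Fin d → Fin n`,
`v_i · [f] = ∑_r v_{f r} · [f with f r replaced by i]`, where `[g] = det M_g`.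

If such a `v` exists, then for a `(d+1)`-set `τ = {i} ∪ f` this identity is a vanishing sum whose
terms have valuations `p(τ ∖ j) + val v_j`, so the least of them is attained twice.

Conversely, choose a nonsingular `f` that no single column exchange improves for the weight
`p(f) - ∑_r u_{f r}`, and let `v` be the row-space vector with `v_{f r} = c_r z ^ u_{f r}`.
Optimality bounds every term of Cramer's rule for `v_i` below by `p(f) + u_i`, and the tropical
condition on `τ = {i} ∪ f` makes the coefficient of `z ^ (p(f) + u_i)` a nonzero linear form in
`c`. For generic `c ∈ ℂ^d` none of these forms vanishes, and then `val v = u`.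
-/

open Function Finset Matrix

theorem zval_eq_orderTop (c : K) : zval c = c.orderTop := by
  unfold zval
  split_ifs with h
  · simp [h]
  · rw [HahnSeries.order_eq_orderTop_of_ne_zero h]

@[simp]
theorem zval_eq_top_iff {c : K} : zval c = ⊤ ↔ c = 0 := by
  rw [zval_eq_orderTop, HahnSeries.orderTop_eq_top]

@[simp]
theorem zval_zero : zval 0 = ⊤ := zval_eq_top_iff.2 rfl

@[simp]
theorem zval_one : zval 1 = 0 := by
  simp [zval]

theorem zval_of_ne_zero {c : K} (hc : c ≠ 0) : zval c = c.order := if_neg hc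

theorem zval_mul (a b : K) : zval (a * b) = zval a + zval b := by
  simp only [zval_eq_orderTop, HahnSeries.orderTop_mul]

@[simp]
theorem zval_neg (c : K) : zval (-c) = zval c := by
  simp only [zval_eq_orderTop, HahnSeries.orderTop_neg]

theorem le_zval_sum {ι : Type*} {s : Finset ι} {x : ι → K} {a : WithTop ℤ}
    (h : ∀ k ∈ s, a ≤ zval (x k)) : a ≤ zval (∑ k ∈ s, x k) := by
  classical
  induction s using Finset.induction_on with
  | empty => simp
  | insert k s hk ih =>
    rw [sum_insert hk, zval_eq_orderTop]
    refine le_trans ?_ HahnSeries.min_orderTop_le_orderTop_add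
    rw [← zval_eq_orderTop, ← zval_eq_orderTop]
    exact le_min (h k (mem_insert_self k s)) (ih fun j hj => h j (mem_insert_of_mem hj))

theorem zval_le_of_coeff_ne_zero {c : K} {m : ℤ} (h : c.coeff m ≠ 0) : zval c ≤ m := by
  rw [zval_eq_orderTop]
  exact HahnSeries.orderTop_le_of_coeff_ne_zero h

theorem coeff_ne_zero_of_zval_eq {c : K} {m : ℤ} (h : zval c = m) : c.coeff m ≠ 0 := by
  rw [zval_eq_orderTop] at h
  exact HahnSeries.coeff_orderTop_ne h

theorem HahnSeries.minAttainedTwice_orderTop_of_sum_eq_zero {Γ R ι : Type*} [LinearOrder Γ]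
    [AddCommMonoid R] {s : Finset ι} (hs : 1 < #s) {x : ι → HahnSeries Γ R}
    (hx : ∑ k ∈ s, x k = 0) : MinAttainedTwice s fun k => (x k).orderTop := by
  obtain ⟨k₁, hk₁, hmin⟩ := s.exists_min_image (fun k => (x k).orderTop) (card_pos.1 (by omega))
  by_contra htwice
  have hlt : ∀ k ∈ s, k ≠ k₁ → (x k₁).orderTop < (x k).orderTop := fun k hk hne =>
    (hmin k hk).lt_of_ne fun heq => htwice ⟨k₁, hk₁, k, hk, hne.symm, heq, hmin⟩
  obtain ⟨k₂, hk₂, hne⟩ := exists_mem_ne hs k₁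
  obtain ⟨g, hg⟩ := WithTop.ne_top_iff_exists.1 (hlt k₂ hk₂ hne).ne_top
  have hcoeff := congrArg (fun y => y.coeff g) hx
  simp only [HahnSeries.coeff_sum, HahnSeries.coeff_zero] at hcoeff
  rw [sum_eq_single_of_mem k₁ hk₁ fun k hk hne =>
    HahnSeries.coeff_eq_zero_of_lt_orderTop (hg ▸ hlt k hk hne)] at hcoeff
  exact HahnSeries.coeff_orderTop_ne hg.symm hcoeff

theorem MinAttainedTwice.image {ι κ α : Type*} [DecidableEq κ] [LinearOrder α] {s : Finset ι}
    {g : ι → κ} (hg : Injective g) {f : κ → α} (h : MinAttainedTwice s (f ∘ g)) :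
    MinAttainedTwice (s.image g) f := by
  obtain ⟨i, hi, j, hj, hij, heq, hmin⟩ := h
  refine ⟨g i, mem_image_of_mem g hi, g j, mem_image_of_mem g hj, hg.ne hij, heq, ?_⟩
  exact forall_mem_image.2 hmin

theorem MinAttainedTwice.exists_ne_le {ι α : Type*} [LinearOrder α] {s : Finset ι}
    {f : ι → α} (h : MinAttainedTwice s f) {i : ι} (hi : i ∈ s) :
    ∃ j ∈ s, j ≠ i ∧ f j ≤ f i := by
  obtain ⟨a, ha, b, hb, hab, heq, hmin⟩ := h
  by_cases hai : a = i
  · exact ⟨b, hb, fun hbi => hab (hai.trans hbi.symm), (heq.symm.trans (congrArg f hai)).le⟩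
  · exact ⟨a, ha, hai, hmin i hi⟩

/-- Cramer's rule, read on a vector `y ᵥ* M` of the row space. -/
theorem vecMul_apply_mul_det_submatrix {R m n : Type*} [CommRing R] [Fintype m] [DecidableEq m]
    (y : m → R) (M : Matrix m n R) (f : m → n) (i : n) :
    (y ᵥ* M) i * (M.submatrix id f).det =
      ∑ r, (y ᵥ* M) (f r) * (M.submatrix id (update f r i)).det := by
  set A := M.submatrix id f
  set b : m → R := fun k => M k i
  have hupdate : ∀ r, M.submatrix id (update f r i) = A.updateCol r b := by
    intro r
    ext k s
    rcases eq_or_ne s r with rfl | hs <;> simp [A, b, *]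
  calc (y ᵥ* M) i * A.det = y ⬝ᵥ (A *ᵥ cramer A b) := by
        rw [cramer_eq_adjugate_mulVec, mulVec_mulVec, mul_adjugate, smul_mulVec, one_mulVec,
          dotProduct_smul, smul_eq_mul, mul_comm]
        rfl
    _ = ∑ r, (y ᵥ* M) (f r) * (M.submatrix id (update f r i)).det := by
        rw [dotProduct_mulVec]
        simp only [dotProduct, cramer_apply, hupdate]
        rfl

theorem det_submatrix_eq_zero_of_not_injective {R m n : Type*} [CommRing R] [Fintype m]
    [DecidableEq m] (M : Matrix m n R) {f : m → n} (hf : ¬ Injective f) :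
    (M.submatrix id f).det = 0 := by
  obtain ⟨k, l, hkl, hne⟩ : ∃ k l, f k = f l ∧ k ≠ l := by simpa [Injective] using hf
  exact det_zero_of_column_eq hne fun s => by simp [hkl]

theorem injective_of_det_submatrix_ne_zero {R m n : Type*} [CommRing R] [Fintype m]
    [DecidableEq m] {M : Matrix m n R} {f : m → n} (hA : (M.submatrix id f).det ≠ 0) :
    Injective f :=
  not_not.1 fun hf => hA (det_submatrix_eq_zero_of_not_injective M hf)

theorem exists_det_submatrix_ne_zero {F m n : Type*} [Field F] [Fintype m] [DecidableEq m]
    [Fintype n] {M : Matrix m n F} (hrank : M.rank = Fintype.card m) :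
    ∃ f : m → n, (M.submatrix id f).det ≠ 0 := by
  obtain ⟨κ, a, ha, hspan, hli⟩ := exists_linearIndependent' F M.col
  have : Fintype κ := Fintype.ofInjective a ha
  have hcard : Fintype.card m = Fintype.card κ := by
    rw [← hrank, rank_eq_finrank_span_cols, ← hspan, finrank_span_eq_card hli]
  set e := Fintype.equivOfCardEq hcard
  refine ⟨a ∘ e, ?_⟩
  have hcols : LinearIndependent F (M.submatrix id (a ∘ e)).col := hli.comp e e.injective
  exact ((isUnit_iff_isUnit_det _).1 (linearIndependent_cols_iff_isUnit.1 hcols)).ne_zero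

theorem image_update_of_injective {ι α : Type*} [Fintype ι] [DecidableEq ι] [DecidableEq α]
    {f : ι → α} (hf : Injective f) {i : α} (hi : i ∉ Set.range f) (r : ι) :
    univ.image (update f r i) = insert i ((univ.image f).erase (f r)) := by
  ext x
  simp only [mem_image, mem_univ, true_and, mem_insert, mem_erase]
  constructor
  · rintro ⟨s, rfl⟩
    rcases eq_or_ne s r with rfl | hs
    · simp
    · simp [update_of_ne hs, hf.ne hs]
  · rintro (rfl | ⟨hx, s, rfl⟩)
    · exact ⟨r, update_self r x f⟩
    · exact ⟨s, update_of_ne (fun h => hx (congrArg f h)) _ _⟩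

theorem pval_image {d n : ℕ} (M : Matrix (Fin d) (Fin n) K) (f : Fin d → Fin n) :
    pval M (univ.image f) = zval (M.submatrix id f).det := by
  by_cases hf : Injective f
  · have hcard : #(univ.image f) = d := by rw [card_image_of_injective _ hf, card_fin]
    set e := (univ.image f).orderIsoOfFin hcard
    have hσ : Injective fun k => e.symm ⟨f k, mem_image_of_mem f (mem_univ k)⟩ :=
      fun k l h => hf (congrArg Subtype.val (e.symm.injective h))
    set σ := Equiv.ofBijective _ hσ.bijective_of_finite
    have hfσ : M.submatrix id f = (M.submatrix id fun k => (e k : Fin n)).submatrix id σ := by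
      ext r k
      simp [σ]
    have hsign : zval ((Equiv.Perm.sign σ : ℤ) : K) = 0 := by
      rcases Int.units_eq_one_or (Equiv.Perm.sign σ) with h | h <;> simp [h]
    rw [pval, dif_pos hcard, hfσ, det_permute', zval_mul, hsign, zero_add]
  · have hcard : #(univ.image f) ≠ d := fun h =>
      hf (by simpa using card_image_iff.1 (h.trans (card_fin d).symm))
    rw [pval, dif_neg hcard, det_submatrix_eq_zero_of_not_injective M hf, zval_zero]

theorem sum_comp_update {ι α G : Type*} [Fintype ι] [DecidableEq ι] [AddCommGroup G]
    (g : α → G) (f : ι → α) (r : ι) (i : α) :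
    ∑ s, g (update f r i s) = ∑ s, g (f s) - g (f r) + g i := by
  simp_rw [← Function.comp_apply (f := g), comp_update, sum_update_of_mem (mem_univ r),
    Fintype.sum_eq_add_sum_compl r (g ∘ f), compl_eq_univ_sdiff]
  abel

theorem exists_exchange_optimal {m n : Type*} [Fintype m] [DecidableEq m] [Fintype n]
    (M : Matrix m n K) (u : n → WithTop ℤ) (hM : ∃ f : m → n, (M.submatrix id f).det ≠ 0) :
    ∃ f : m → n, (M.submatrix id f).det ≠ 0 ∧ ∀ i r,
      zval (M.submatrix id f).det + u i ≤ zval (M.submatrix id (update f r i)).det + u (f r) := by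
  classical
  -- minimised lexicographically: first the number of finite `u (f r)`, then `val [f] - ∑ u (f r)`
  let w : n → ℤ × ℤ := fun j => (if u j = ⊤ then 0 else 1, -(u j).untopD 0)
  let W : (m → n) → Lex (ℤ × ℤ) := fun f =>
    toLex ((0, (M.submatrix id f).det.order) + ∑ r, w (f r))
  obtain ⟨f, hf, hmin⟩ := (univ.filter fun f : m → n => (M.submatrix id f).det ≠ 0).exists_min_image
    W (by obtain ⟨f, hf⟩ := hM; exact ⟨f, by simpa using hf⟩)
  rw [mem_filter] at hf
  refine ⟨f, hf.2, fun i r => ?_⟩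
  by_cases hfr : u (f r) = ⊤
  · simp [hfr]
  by_cases hΔ : (M.submatrix id (update f r i)).det = 0
  · simp [hΔ]
  have hle := hmin (update f r i) (by simpa using hΔ)
  simp only [W, Prod.Lex.toLex_le_toLex, sum_comp_update w] at hle
  obtain ⟨a, ha⟩ := WithTop.ne_top_iff_exists.1 hfr
  rw [zval_of_ne_zero hf.2, zval_of_ne_zero hΔ, ← ha]
  by_cases hi : u i = ⊤
  · simp only [Prod.fst_add, zero_add, hfr, ↓reduceIte, hi, WithTop.untopD_top, neg_zero,
      Prod.fst_sub, add_zero, Prod.snd_add, Prod.snd_sub, sub_neg_eq_add, w] at hle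
    omega
  · obtain ⟨b, hb⟩ := WithTop.ne_top_iff_exists.1 hi
    simp only [Prod.fst_add, zero_add, ← ha, WithTop.coe_ne_top, ↓reduceIte, WithTop.untopD_coe,
      ← hb, Prod.fst_sub, sub_add_cancel, lt_self_iff_false, Prod.snd_add, Prod.snd_sub,
      sub_neg_eq_add, true_and, false_or, w] at hle
    rw [← hb]
    norm_cast
    omega

theorem exists_forall_dotProduct_ne_zero {F ι κ : Type*} [Field F] [Infinite F] [Fintype ι]
    [DecidableEq ι] [Finite κ] (a : κ → ι → F) (ha : ∀ k, a k ≠ 0) :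
    ∃ c : ι → F, ∀ k, a k ⬝ᵥ c ≠ 0 := by
  have : Fintype κ := Fintype.ofFinite κ
  have hker : ∀ k, LinearMap.ker (dotProductEquiv F ι (a k)) ≠ ⊤ := fun k h =>
    ha k ((dotProductEquiv F ι).map_eq_zero_iff.1 (LinearMap.ker_eq_top.1 h))
  obtain ⟨c, -, hc⟩ := Set.exists_of_ssubset
    (Submodule.iUnion_ssubset_of_forall_ne_top_of_card_lt univ _ hker
      (by simp [ENat.card_eq_top_of_infinite]))
  exact ⟨c, by simpa using hc⟩

section ExtendFromCols

variable {F m n : Type*} [Field F] [Fintype m] [DecidableEq m]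

def extendFromCols (M : Matrix m n F) (f : m → n) (x : m → F) : n → F :=
  (x ᵥ* (M.submatrix id f)⁻¹) ᵥ* M

variable {M : Matrix m n F} {f : m → n}

theorem extendFromCols_mem_span (x : m → F) :
    extendFromCols M f x ∈ Submodule.span F (Set.range fun r => (M r : n → F)) := by
  rw [extendFromCols, vecMul_eq_sum]
  exact Submodule.sum_mem _ fun r _ => Submodule.smul_mem _ _ (Submodule.subset_span ⟨r, rfl⟩)

theorem extendFromCols_apply_self (hA : (M.submatrix id f).det ≠ 0) (x : m → F) (r : m) :
    extendFromCols M f x (f r) = x r := by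
  change ((x ᵥ* (M.submatrix id f)⁻¹) ᵥ* M.submatrix id f) r = x r
  rw [vecMul_vecMul, nonsing_inv_mul _ (isUnit_iff_ne_zero.2 hA), vecMul_one]

theorem extendFromCols_mul_det (hA : (M.submatrix id f).det ≠ 0) (x : m → F) (i : n) :
    extendFromCols M f x i * (M.submatrix id f).det =
      ∑ r, x r * (M.submatrix id (update f r i)).det := by
  rw [extendFromCols, vecMul_apply_mul_det_submatrix]
  exact sum_congr rfl fun r _ => by rw [← extendFromCols_apply_self hA x r]; rfl

end ExtendFromCols

def monomialOfVal (a : WithTop ℤ) : K :=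
  a.recTopCoe 0 fun m => HahnSeries.single m 1

@[simp]
theorem zval_monomialOfVal (a : WithTop ℤ) : zval (monomialOfVal a) = a := by
  induction a with
  | top => simp [monomialOfVal]
  | coe m => simp [monomialOfVal, zval_eq_orderTop]

theorem zval_le_zval_C_mul (c : ℂ) (x : K) : zval x ≤ zval (HahnSeries.C c * x) := by
  simpa only [zval_eq_orderTop, HahnSeries.C_mul_eq_smul] using
    HahnSeries.orderTop_le_orderTop_smul c x

def exchangeCoeff {m n : Type*} [Fintype m] [DecidableEq m] (M : Matrix m n K) (u : n → WithTop ℤ)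
    (f : m → n) (i : n) (a : ℤ) : m → ℂ :=
  fun r => (monomialOfVal (u (f r)) * (M.submatrix id (update f r i)).det).coeff a

section TropicalLift

variable {m n : Type*} [Fintype m] [DecidableEq m] {M : Matrix m n K} {u : n → WithTop ℤ}
  {f : m → n}

def tropicalLift (M : Matrix m n K) (u : n → WithTop ℤ) (f : m → n) (c : m → ℂ) : n → K :=
  extendFromCols M f fun r => HahnSeries.C (c r) * monomialOfVal (u (f r))

theorem tropicalLift_mem_span (c : m → ℂ) :
    tropicalLift M u f c ∈ Submodule.span K (Set.range fun r => (M r : n → K)) :=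
  extendFromCols_mem_span _

theorem coeff_tropicalLift_mul_det (hA : (M.submatrix id f).det ≠ 0) (c : m → ℂ) (i : n)
    (a : ℤ) :
    (tropicalLift M u f c i * (M.submatrix id f).det).coeff a = exchangeCoeff M u f i a ⬝ᵥ c := by
  rw [tropicalLift, extendFromCols_mul_det hA, HahnSeries.coeff_sum]
  refine sum_congr rfl fun r _ => ?_
  rw [mul_assoc, HahnSeries.C_mul_eq_smul, HahnSeries.coeff_smul, smul_eq_mul, mul_comm]
  rfl

variable (hA : (M.submatrix id f).det ≠ 0)
  (hopt : ∀ i r,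
    zval (M.submatrix id f).det + u i ≤ zval (M.submatrix id (update f r i)).det + u (f r))
include hA hopt

theorem le_zval_tropicalLift_mul_det (c : m → ℂ) (i : n) :
    zval (M.submatrix id f).det + u i ≤ zval (tropicalLift M u f c i * (M.submatrix id f).det) := by
  rw [tropicalLift, extendFromCols_mul_det hA]
  refine le_zval_sum fun r _ => ?_
  calc zval (M.submatrix id f).det + u i
      ≤ zval (M.submatrix id (update f r i)).det + u (f r) := hopt i r
    _ ≤ _ := by
      rw [zval_mul, add_comm]
      gcongr
      simpa using zval_le_zval_C_mul (c r) (monomialOfVal (u (f r)))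

theorem le_zval_tropicalLift (c : m → ℂ) (i : n) : u i ≤ zval (tropicalLift M u f c i) := by
  have h := le_zval_tropicalLift_mul_det hA hopt c i
  rwa [zval_mul, add_comm _ (zval (M.submatrix id f).det),
    WithTop.add_le_add_iff_left (zval_eq_top_iff.not.2 hA)] at h

theorem zval_tropicalLift_eq (c : m → ℂ) (i : n) {a : ℤ}
    (ha : zval (M.submatrix id f).det + u i = a) (hc : exchangeCoeff M u f i a ⬝ᵥ c ≠ 0) :
    zval (tropicalLift M u f c i) = u i := by
  refine le_antisymm ?_ (le_zval_tropicalLift hA hopt c i)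
  have h := zval_le_of_coeff_ne_zero ((coeff_tropicalLift_mul_det hA c i a).symm ▸ hc)
  rwa [zval_mul, add_comm _ (zval (M.submatrix id f).det), ← ha,
    WithTop.add_le_add_iff_left (zval_eq_top_iff.not.2 hA)] at h

end TropicalLift

section InsertImage

variable {d n : ℕ} (M : Matrix (Fin d) (Fin n) K) {f : Fin d → Fin n} {i : Fin n}

theorem pval_insert_image_erase_self (hi : i ∉ Set.range f) :
    pval M ((insert i (univ.image f)).erase i) = zval (M.submatrix id f).det := by
  rw [erase_insert (by simpa using hi), pval_image]

theorem pval_insert_image_erase_apply (hf : Injective f) (hi : i ∉ Set.range f) (r : Fin d) :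
    pval M ((insert i (univ.image f)).erase (f r)) =
      zval (M.submatrix id (update f r i)).det := by
  rw [erase_insert_of_ne fun h => hi ⟨r, h.symm⟩, ← image_update_of_injective hf hi, pval_image]

end InsertImage

theorem minAttainedTwice_of_mem_span {d n : ℕ} (M : Matrix (Fin d) (Fin n) K) {v : Fin n → K}
    (hv : v ∈ Submodule.span K (Set.range fun r : Fin d => (M r : Fin n → K))) (hv0 : v ≠ 0)
    (τ : Finset (Fin n)) (hτ : #τ = d + 1) :
    MinAttainedTwice τ fun j => pval M (τ.erase j) + zval (v j) := by
  obtain ⟨y, rfl⟩ : ∃ y, y ᵥ* M = v := by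
    simpa [vecMul_eq_sum] using (Submodule.mem_span_range_iff_exists_fun K).1 hv
  have hd : d ≠ 0 := by
    rintro rfl
    exact hv0 (by ext; simp [vecMul, dotProduct])
  obtain ⟨i, hi⟩ := card_pos.1 (by omega : 0 < #τ)
  have hcard : #(τ.erase i) = d := by rw [card_erase_of_mem hi, hτ]; rfl
  set f : Fin d → Fin n := fun k => (τ.erase i).orderEmbOfFin hcard k
  have hf : Injective f := ((τ.erase i).orderEmbOfFin hcard).injective
  have hfi : i ∉ Set.range f := by simp [f, range_orderEmbOfFin]
  have hτf : τ = insert i (univ.image f) := by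
    rw [image_orderEmbOfFin_univ, insert_erase hi]
  -- Cramer's rule for the columns `f` and `i`, as a vanishing sum indexed like `τ`
  let g : Fin (d + 1) → Fin n := Fin.cons i f
  let t : Fin (d + 1) → K := Fin.cons ((y ᵥ* M) i * (M.submatrix id f).det)
    fun r => -((y ᵥ* M) (f r) * (M.submatrix id (update f r i)).det)
  have hsum : ∑ k, t k = 0 := by
    rw [Fin.sum_cons, sum_neg_distrib, vecMul_apply_mul_det_submatrix, add_neg_cancel]
  have ht : ∀ k, (t k).orderTop = pval M (τ.erase (g k)) + zval ((y ᵥ* M) (g k)) := by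
    refine Fin.cases ?_ fun r => ?_ <;> rw [← zval_eq_orderTop, hτf]
    · simp only [t, g, Fin.cons_zero]
      rw [zval_mul, pval_insert_image_erase_self M hfi, add_comm]
    · simp only [t, g, Fin.cons_succ]
      rw [zval_neg, zval_mul, pval_insert_image_erase_apply M hf hfi, add_comm]
  have hmin := HahnSeries.minAttainedTwice_orderTop_of_sum_eq_zero
    (by rw [card_univ, Fintype.card_fin]; omega) hsum
  simp only [ht] at hmin
  have hg : univ.image g = τ := by
    rw [hτf]
    ext j
    simp [g, Fin.exists_fin_succ, eq_comm]
  have := MinAttainedTwice.image (f := fun j => pval M (τ.erase j) + zval ((y ᵥ* M) j))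
    (Fin.cons_injective_iff.2 ⟨hfi, hf⟩) hmin
  rwa [hg] at this

theorem exists_tight_exchange {d n : ℕ} {M : Matrix (Fin d) (Fin n) K} {u : Fin n → WithTop ℤ}
    (hL : ∀ τ : Finset (Fin n), #τ = d + 1 →
      MinAttainedTwice τ fun j => pval M (τ.erase j) + u j)
    {f : Fin d → Fin n} (hA : (M.submatrix id f).det ≠ 0)
    (hopt : ∀ i r,
      zval (M.submatrix id f).det + u i ≤ zval (M.submatrix id (update f r i)).det + u (f r))
    (i : Fin n) :
    ∃ r,
      zval (M.submatrix id (update f r i)).det + u (f r) = zval (M.submatrix id f).det + u i := by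
  by_cases hi : i ∈ Set.range f
  · obtain ⟨r, rfl⟩ := hi
    exact ⟨r, by rw [update_eq_self]⟩
  have hf := injective_of_det_submatrix_ne_zero hA
  have hτ : #(insert i (univ.image f)) = d + 1 := by
    rw [card_insert_of_notMem (by simpa using hi), card_image_of_injective _ hf, card_fin]
  obtain ⟨j, hj, hji, hle⟩ := (hL _ hτ).exists_ne_le (mem_insert_self i _)
  obtain ⟨r, -, rfl⟩ := mem_image.1 ((mem_insert.1 hj).resolve_left hji)
  rw [pval_insert_image_erase_apply M hf hi, pval_insert_image_erase_self M hi] at hle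
  exact ⟨r, le_antisymm hle (hopt i r)⟩

theorem exists_mem_span_zval_eq {d n : ℕ} (M : Matrix (Fin d) (Fin n) K) (hrank : M.rank = d)
    {u : Fin n → WithTop ℤ} (hu : ∃ i, u i ≠ ⊤)
    (hL : ∀ τ : Finset (Fin n), #τ = d + 1 →
      MinAttainedTwice τ fun j => pval M (τ.erase j) + u j) :
    ∃ v : Fin n → K, v ≠ 0 ∧
      v ∈ Submodule.span K (Set.range fun r : Fin d => (M r : Fin n → K)) ∧
      ∀ i, zval (v i) = u i := by
  obtain ⟨f, hA, hopt⟩ :=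
    exists_exchange_optimal M u (exists_det_submatrix_ne_zero (by rw [hrank, Fintype.card_fin]))
  have hfin : ∀ i : {i // u i ≠ ⊤}, zval (M.submatrix id f).det + u i ≠ ⊤ := fun i =>
    WithTop.add_ne_top.2 ⟨zval_eq_top_iff.not.2 hA, i.2⟩
  let a : {i // u i ≠ ⊤} → ℤ := fun i => (zval (M.submatrix id f).det + u i).untop (hfin i)
  have ha : ∀ i : {i // u i ≠ ⊤}, zval (M.submatrix id f).det + u i = a i := fun i =>
    (WithTop.coe_untop _ _).symm
  have hcoeff : ∀ i : {i // u i ≠ ⊤}, exchangeCoeff M u f i (a i) ≠ 0 := by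
    intro i h0
    obtain ⟨r, hr⟩ := exists_tight_exchange hL hA hopt i
    refine coeff_ne_zero_of_zval_eq ?_ (congrFun h0 r)
    rw [zval_mul, zval_monomialOfVal, add_comm, hr, ha]
  obtain ⟨c, hc⟩ := exists_forall_dotProduct_ne_zero _ hcoeff
  have hv : ∀ i, zval (tropicalLift M u f c i) = u i := by
    intro i
    by_cases hi : u i = ⊤
    · rw [hi]
      exact top_le_iff.1 (hi ▸ le_zval_tropicalLift hA hopt c i)
    · exact zval_tropicalLift_eq hA hopt c i (ha ⟨i, hi⟩) (hc ⟨i, hi⟩)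
  obtain ⟨i₀, hi₀⟩ := hu
  refine ⟨tropicalLift M u f c, fun h0 => hi₀ ?_, tropicalLift_mem_span c, hv⟩
  rw [← hv i₀, h0, Pi.zero_apply, zval_zero]

theorem lattice_points_of_tropicalized_row_space {d n : ℕ}
    (M : Matrix (Fin d) (Fin n) K) (hrank : M.rank = d)
    (u : Fin n → WithTop ℤ) (hu : ¬ ∀ i, u i = ⊤) :
    (∀ τ : Finset (Fin n), τ.card = d + 1 →
        MinAttainedTwice τ (fun i => pval M (τ.erase i) + u i)) ↔
    (∃ v : Fin n → K, v ≠ 0 ∧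
        v ∈ Submodule.span K (Set.range fun i : Fin d => (M i : Fin n → K)) ∧
        ∀ i : Fin n, zval (v i) = u i) := by
  refine ⟨exists_mem_span_zval_eq M hrank (not_forall.1 hu), ?_⟩
  rintro ⟨v, hv0, hv, hvu⟩ τ hτ
  simpa only [hvu] using minAttainedTwice_of_mem_span M hv hv0 τ hτ
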